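/- Let T_i = conv{p_{n1}, p_{s1}, p_{s2}} and T_j = conv{p_{n2}, p_{s1}, p_{s2}} be two unimodular lattice triangles in Z^2 sharing the edge {p_{s1}, p_{s2}}, with p_{n1} and p_{n2} on opposite sides of the line through p_{s1}, p_{s2}. Choose coordinates so that p_{s1}^2 = p_{s2}^2 =: y_0 and p_{s1}^1 = p_{n1}^1. Then every point (x, y) ∈ conv(T_i ∪ T_j) satisfies y_0 - 1 ≤ y ≤ y_0 + 1, and every non-vertex lattice point of conv(T_i ∪ T_j) has second coordinate equal to y_0. -/

import Mathlib

/-! Unimodularity of a triangle with a horizontal edge forces its apex to lie at height one above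
or below that edge, so the apexes of the two triangles sit on the lines `y = y₀ ± 1` and the
union lies in the slab between them. Each of these two lines supports the convex hull in a single
vertex, so a lattice point of the hull other than an apex lies on the line `y = y₀`. -/

open Set

/-- Embedding of the lattice `ℤ²` into `ℝ²`. -/
def latticeEmbed (p : ℤ × ℤ) : ℝ × ℝ := ((p.1 : ℝ), (p.2 : ℝ))

/-- `|det(b - a, c - a)| = 1`: the lattice triangle with vertices `a, b, c`
is unimodular. -/
def IsUnimodularTriangle (a b c : ℤ × ℤ) : Prop :=
  ((b.1 - a.1) * (c.2 - a.2) - (b.2 - a.2) * (c.1 - a.1)).natAbs = 1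

lemma latticeEmbed_injective : Function.Injective latticeEmbed := fun p q h => by
  simp only [latticeEmbed, Prod.mk.injEq, Int.cast_inj] at h
  exact Prod.ext h.1 h.2

@[simp]
lemma latticeEmbed_snd (p : ℤ × ℤ) : (latticeEmbed p).2 = p.2 := rfl

lemma IsUnimodularTriangle.natAbs_sub_snd_eq_one {a b c : ℤ × ℤ}
    (h : IsUnimodularTriangle a b c) (hbc : b.2 = c.2) : (a.2 - b.2).natAbs = 1 := by
  have hdet : (b.1 - a.1) * (c.2 - a.2) - (b.2 - a.2) * (c.1 - a.1)
      = (a.2 - b.2) * (c.1 - b.1) := by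
    rw [hbc]; ring
  rw [IsUnimodularTriangle, hdet, Int.natAbs_mul] at h
  exact Nat.eq_one_of_mul_eq_one_right h

lemma eq_add_one_and_eq_sub_one_of_mul_neg {a b y₀ : ℤ} (ha : (a - y₀).natAbs = 1)
    (hb : (b - y₀).natAbs = 1) (hab : (a - y₀) * (b - y₀) < 0) :
    (a = y₀ + 1 ∧ b = y₀ - 1) ∨ (a = y₀ - 1 ∧ b = y₀ + 1) := by
  rcases Int.natAbs_eq_iff.mp ha with ha | ha <;> rcases Int.natAbs_eq_iff.mp hb with hb | hb <;>
    rw [ha, hb] at hab <;> norm_num at hab <;> omega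

section ConvexHull

variable {E : Type*} [AddCommGroup E] [Module ℝ E]

lemma apply_le_of_mem_convexHull (f : E →ₗ[ℝ] ℝ) {s : Set E} {c : ℝ} (hs : ∀ x ∈ s, f x ≤ c)
    {q : E} (hq : q ∈ convexHull ℝ s) : f q ≤ c :=
  convexHull_min hs (convex_halfSpace_le f.isLinear c) hq

lemma eq_of_mem_convexHull_insert_of_apply_eq (f : E →ₗ[ℝ] ℝ) {v : E} {t : Set E} {c : ℝ}
    (hv : f v ≤ c) (ht : ∀ x ∈ t, f x < c) {q : E} (hq : q ∈ convexHull ℝ (insert v t))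
    (hfq : f q = c) : q = v := by
  rcases t.eq_empty_or_nonempty with rfl | hne
  · simpa using hq
  rw [convexHull_insert hne, convexJoin_singleton_left, mem_iUnion₂] at hq
  obtain ⟨y, hy, a, b, ha, hb, hab, rfl⟩ := hq
  obtain rfl : a = 1 - b := by linarith
  have hfy : f y < c := convexHull_min ht (convex_halfSpace_lt f.isLinear c) hy
  have hb0 : b = 0 := by
    rw [map_add, map_smul, map_smul, smul_eq_mul, smul_eq_mul] at hfq
    by_contra hb0
    linarith [mul_le_mul_of_nonneg_left hv ha, mul_lt_mul_of_pos_left hfy (hb.lt_of_ne' hb0)]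
  rw [hb0, zero_smul, add_zero, sub_zero, one_smul]

end ConvexHull

section ApexHeights

variable {pn1 pn2 ps1 ps2 : ℤ × ℤ} {y₀ : ℤ}
  (h1 : pn1.2 = y₀ + 1) (h2 : pn2.2 = y₀ - 1) (hs1 : ps1.2 = y₀) (hs2 : ps2.2 = y₀)
include h1 h2 hs1 hs2

lemma snd_mem_Icc_of_mem_convexHull {q : ℝ × ℝ} (hq : q ∈ convexHull ℝ
    {latticeEmbed pn1, latticeEmbed pn2, latticeEmbed ps1, latticeEmbed ps2}) :
    (y₀ : ℝ) - 1 ≤ q.2 ∧ q.2 ≤ (y₀ : ℝ) + 1 := by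
  refine ⟨?_, ?_⟩
  · refine neg_le_neg_iff.mp (apply_le_of_mem_convexHull (-LinearMap.snd ℝ ℝ ℝ) ?_ hq)
    simp [h1, h2, hs1, hs2]; linarith
  · refine apply_le_of_mem_convexHull (LinearMap.snd ℝ ℝ ℝ) ?_ hq
    simp [h1, h2, hs1, hs2]; linarith

lemma snd_eq_of_latticeEmbed_mem_convexHull {p : ℤ × ℤ} (hp : latticeEmbed p ∈ convexHull ℝ
    {latticeEmbed pn1, latticeEmbed pn2, latticeEmbed ps1, latticeEmbed ps2})
    (hp1 : p ≠ pn1) (hp2 : p ≠ pn2) : p.2 = y₀ := by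
  have hreal := snd_mem_Icc_of_mem_convexHull h1 h2 hs1 hs2 hp
  rw [latticeEmbed_snd] at hreal
  have hbounds : y₀ - 1 ≤ p.2 ∧ p.2 ≤ y₀ + 1 := by exact_mod_cast hreal
  rcases (by omega : p.2 = y₀ - 1 ∨ p.2 = y₀ ∨ p.2 = y₀ + 1) with hp' | hp' | hp'
  · rw [insert_comm] at hp
    refine absurd (latticeEmbed_injective ?_) hp2
    refine eq_of_mem_convexHull_insert_of_apply_eq (-LinearMap.snd ℝ ℝ ℝ) (c := 1 - y₀)
      (by simp [h2]) ?_ hp (by simp [hp'])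
    simp [h1, hs1, hs2]; linarith
  · exact hp'
  · refine absurd (latticeEmbed_injective ?_) hp1
    refine eq_of_mem_convexHull_insert_of_apply_eq (LinearMap.snd ℝ ℝ ℝ) (c := y₀ + 1)
      (by simp [h1]) ?_ hp (by simp [hp'])
    simp [h2, hs1, hs2]; linarith

end ApexHeights

theorem points_of_union_of_unimodular_triangles_general
    (pn1 pn2 ps1 ps2 : ℤ × ℤ) (y₀ : ℤ)
    (hs1 : ps1.2 = y₀) (hs2 : ps2.2 = y₀)
    (hTi : IsUnimodularTriangle pn1 ps1 ps2)
    (hTj : IsUnimodularTriangle pn2 ps1 ps2)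
    (hopp : (pn1.2 - y₀) * (pn2.2 - y₀) < 0)
    (C : Set (ℝ × ℝ))
    (hC : C = convexHull ℝ
      {latticeEmbed pn1, latticeEmbed pn2, latticeEmbed ps1, latticeEmbed ps2}) :
    (∀ q ∈ C, (y₀ : ℝ) - 1 ≤ q.2 ∧ q.2 ≤ (y₀ : ℝ) + 1) ∧
      (∀ p : ℤ × ℤ, latticeEmbed p ∈ C →
        p ≠ pn1 → p ≠ pn2 → p ≠ ps1 → p ≠ ps2 → p.2 = y₀) := by
  have hi := hTi.natAbs_sub_snd_eq_one (hs1.trans hs2.symm)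
  have hj := hTj.natAbs_sub_snd_eq_one (hs1.trans hs2.symm)
  rw [hs1] at hi hj
  subst hC
  rcases eq_add_one_and_eq_sub_one_of_mul_neg hi hj hopp with ⟨h1, h2⟩ | ⟨h1, h2⟩
  · exact ⟨fun q => snd_mem_Icc_of_mem_convexHull h1 h2 hs1 hs2,
      fun p hp hp1 hp2 _ _ => snd_eq_of_latticeEmbed_mem_convexHull h1 h2 hs1 hs2 hp hp1 hp2⟩
  · rw [insert_comm]
    exact ⟨fun q => snd_mem_Icc_of_mem_convexHull h2 h1 hs1 hs2,
      fun p hp hp1 hp2 _ _ => snd_eq_of_latticeEmbed_mem_convexHull h2 h1 hs1 hs2 hp hp2 hp1⟩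

/-- Two unimodular lattice triangles sharing the edge `{p_{s1}, p_{s2}}`, with
apexes `p_{n1}`, `p_{n2}` on opposite sides, in coordinates where the shared
edge is horizontal at height `y₀` and the edge `{p_{s1}, p_{n1}}` is vertical:
every point of the convex hull of the union has second coordinate between
`y₀ - 1` and `y₀ + 1`, and every non-vertex lattice point of the hull has
second coordinate exactly `y₀`. -/
theorem points_of_union_of_unimodular_triangles
    (pn1 pn2 ps1 ps2 : ℤ × ℤ) (y₀ : ℤ)
    (hs1 : ps1.2 = y₀) (hs2 : ps2.2 = y₀) (hvert : ps1.1 = pn1.1)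
    (hTi : IsUnimodularTriangle pn1 ps1 ps2)
    (hTj : IsUnimodularTriangle pn2 ps1 ps2)
    (hopp : (pn1.2 - y₀) * (pn2.2 - y₀) < 0)
    (C : Set (ℝ × ℝ))
    (hC : C = convexHull ℝ
      {latticeEmbed pn1, latticeEmbed pn2, latticeEmbed ps1, latticeEmbed ps2}) :
    (∀ q ∈ C, (y₀ : ℝ) - 1 ≤ q.2 ∧ q.2 ≤ (y₀ : ℝ) + 1) ∧
      (∀ p : ℤ × ℤ, latticeEmbed p ∈ C →
        p ≠ pn1 → p ≠ pn2 → p ≠ ps1 → p ≠ ps2 → p.2 = y₀) :=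
  points_of_union_of_unimodular_triangles_general pn1 pn2 ps1 ps2 y₀ hs1 hs2 hTi hTj hopp C hC
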